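/- arXiv:1311.5277 — 6 statements merged into one kernel-verified Lean document; each statement's English description precedes it below -/
import Mathlib

section
/- Let λ be a real number with |λ| > 2, and let ρ be the root of t² − λ·t + 1 = 0 of absolute value strictly less than 1 (explicitly, ρ = (λ − √(λ² − 4))/2 if λ > 2 and ρ = (λ + √(λ² − 4))/2 if λ < −2). If (x_n)_{n∈ℕ} is a square-summable sequence of complex numbers satisfying x_{n+2} = λ·x_{n+1} − x_n for all n ∈ ℕ, then x_n = x_0·ρⁿ for all n ∈ ℕ. -/
/-!
Both roots `ρ` and `σ = λ - ρ` of `t² - λt + 1` are real with `ρσ = 1` and `|σ| > 1`, so the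
recurrence factors as `x_{n+2} - ρ x_{n+1} = σ (x_{n+1} - ρ x_n)`. The sequence
`y_n = x_{n+1} - ρ x_n` is thus geometric with ratio `σ`; its norm is nondecreasing, yet it tends
to `0` because `x` is square-summable, so `y = 0`, i.e. `x_{n+1} = ρ x_n`.
-/

open Filter Topology

lemma eq_zero_of_tendsto_zero_of_succ_eq_smul {𝕜 E : Type*} [NormedField 𝕜]
    [NormedAddCommGroup E] [NormedSpace 𝕜 E] {a : ℕ → E} {c : 𝕜} (hc : 1 ≤ ‖c‖)
    (ha : ∀ n, a (n + 1) = c • a n) (h0 : Tendsto a atTop (𝓝 0)) (n : ℕ) : a n = 0 := by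
  have hmono : Monotone fun n => ‖a n‖ := monotone_nat_of_le_succ fun n => by
    rw [ha n, norm_smul]
    exact le_mul_of_one_le_left (norm_nonneg _) hc
  exact norm_le_zero_iff.mp (hmono.ge_of_tendsto (by simpa using h0.norm) n)

lemma eq_mul_pow_of_succ_eq_mul {M : Type*} [Monoid M] {x : ℕ → M} {ρ : M}
    (hx : ∀ n, x (n + 1) = x n * ρ) (n : ℕ) : x n = x 0 * ρ ^ n := by
  induction n with
  | zero => simp
  | succ k ih => rw [hx k, ih, pow_succ, mul_assoc]

lemma tendsto_zero_of_summable_norm_sq {E : Type*} [SeminormedAddCommGroup E] {x : ℕ → E}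
    (hx : Summable fun n => ‖x n‖ ^ 2) : Tendsto x atTop (𝓝 0) := by
  rw [tendsto_zero_iff_norm_tendsto_zero]
  simpa [Function.comp_def, Real.sqrt_sq (norm_nonneg _)] using
    (Real.continuous_sqrt.tendsto 0).comp hx.tendsto_atTop_zero

lemma eq_mul_pow_of_tendsto_zero_of_linearRecurrence {K : Type*} [NormedField K]
    {x : ℕ → K} {t ρ : K} (hρ : ρ * (t - ρ) = 1) (hσ : 1 ≤ ‖t - ρ‖)
    (h0 : Tendsto x atTop (𝓝 0)) (hrec : ∀ n, x (n + 2) = t * x (n + 1) - x n) (n : ℕ) :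
    x n = x 0 * ρ ^ n := by
  set y : ℕ → K := fun n => x (n + 1) - ρ * x n
  have hy : ∀ n, y (n + 1) = (t - ρ) • y n := fun n => by
    simp only [y, smul_eq_mul]
    linear_combination hrec n + x n * hρ
  have hy0 : Tendsto y atTop (𝓝 0) := by
    simpa using (h0.comp (tendsto_add_atTop_nat 1)).sub (h0.const_mul ρ)
  refine eq_mul_pow_of_succ_eq_mul (fun n => ?_) n
  linear_combination eq_zero_of_tendsto_zero_of_succ_eq_smul hσ hy hy0 n

lemma mul_sub_eq_one_of_eq_root {lam ρ : ℝ} (hlam : 4 ≤ lam ^ 2)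
    (hρ : ρ = if 2 < lam then (lam - Real.sqrt (lam ^ 2 - 4)) / 2
      else (lam + Real.sqrt (lam ^ 2 - 4)) / 2) :
    ρ * (lam - ρ) = 1 := by
  have hs : Real.sqrt (lam ^ 2 - 4) ^ 2 = lam ^ 2 - 4 := Real.sq_sqrt (by linarith)
  split_ifs at hρ <;> subst hρ <;> linear_combination -hs / 4

lemma one_lt_abs_sub_of_eq_root {lam ρ : ℝ} (hlam : 2 < |lam|)
    (hρ : ρ = if 2 < lam then (lam - Real.sqrt (lam ^ 2 - 4)) / 2
      else (lam + Real.sqrt (lam ^ 2 - 4)) / 2) :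
    1 < |lam - ρ| := by
  have hs := Real.sqrt_nonneg (lam ^ 2 - 4)
  split_ifs at hρ with h <;> subst hρ
  · rw [abs_of_pos] <;> linarith
  · have : lam < -2 := by rcases lt_abs.mp hlam with h' | h' <;> linarith
    rw [abs_of_neg] <;> linarith

/-- Let `λ` be real with `|λ| > 2` and let `ρ` be the root of `t² − λt + 1 = 0` of
absolute value less than 1 (explicitly `ρ = (λ − √(λ²−4))/2` if `λ > 2` and
`ρ = (λ + √(λ²−4))/2` if `λ < −2`).  If `(x_n)` is a square-summable sequence of
complex numbers satisfying `x_{n+2} = λ x_{n+1} − x_n` for all `n`, then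
`x_n = x_0 ρⁿ` for all `n`. -/
theorem stmt0 (lam : ℝ) (hlam : 2 < |lam|) (ρ : ℝ)
    (hρ : ρ = if 2 < lam then (lam - Real.sqrt (lam ^ 2 - 4)) / 2
              else (lam + Real.sqrt (lam ^ 2 - 4)) / 2)
    (x : ℕ → ℂ) (hx : Summable fun n : ℕ => ‖x n‖ ^ 2)
    (hrec : ∀ n : ℕ, x (n + 2) = (lam : ℂ) * x (n + 1) - x n) :
    ∀ n : ℕ, x n = x 0 * (ρ : ℂ) ^ n := by
  have h4 : 4 ≤ lam ^ 2 := by nlinarith [sq_abs lam, abs_nonneg lam]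
  have hprod : (ρ : ℂ) * ((lam : ℂ) - ρ) = 1 := by
    exact_mod_cast mul_sub_eq_one_of_eq_root h4 hρ
  have hσ : 1 ≤ ‖(lam : ℂ) - ρ‖ := by
    rw [← Complex.ofReal_sub, Complex.norm_real, Real.norm_eq_abs]
    exact (one_lt_abs_sub_of_eq_root hlam hρ).le
  exact eq_mul_pow_of_tendsto_zero_of_linearRecurrence hprod hσ
    (tendsto_zero_of_summable_norm_sq hx) hrec
end

section
/- Let δ > 1 be real and y = s + s* − δ^{−1/2} e. Every eigenvalue of y has absolute value at most 2: if λ ∈ ℂ, ξ ∈ H, ξ ≠ 0, and y ξ = λ ξ, then |λ| ≤ 2. -/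
/-!
The coordinates `a n = ⟪ξ n, v⟫` of an eigenvector satisfy the three-term recurrence
`a (n + 2) = λ a (n + 1) - a n` with boundary condition `a 1 = (λ + δ^{-1/2}) a 0`.
Since `δ^{-1/2} < 1`, if `|λ| > 2` the moduli grow at least like `(|λ| - 1)ⁿ |a 0|`;
a square-summable, hence bounded, solution must therefore have `a 0 = 0`, and then it vanishes.
-/

open ContinuousLinearMap

noncomputable section

/-- The Hilbert space `ℓ²(ℕ, ℂ)`. -/
abbrev H : Type := lp (fun _ : ℕ => ℂ) 2

/-- The standard orthonormal basis of `ℓ²(ℕ, ℂ)`. -/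
def ξ (n : ℕ) : H := lp.single 2 n 1

section Recurrence

variable {lam t : ℂ} {a : ℕ → ℂ}

theorem mul_norm_le_norm_succ_of_recurrence (hlam : 2 ≤ ‖lam‖) (ht : ‖t‖ ≤ 1)
    (h1 : a 1 = (lam + t) * a 0) (hrec : ∀ n, a (n + 2) = lam * a (n + 1) - a n) (n : ℕ) :
    (‖lam‖ - 1) * ‖a n‖ ≤ ‖a (n + 1)‖ := by
  induction n with
  | zero =>
    have hlam_t : ‖lam‖ - 1 ≤ ‖lam + t‖ := by
      have := norm_sub_norm_le lam (-t)
      rw [norm_neg, sub_neg_eq_add] at this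
      linarith
    rw [h1, norm_mul]
    exact mul_le_mul_of_nonneg_right hlam_t (norm_nonneg _)
  | succ k ih =>
    have hmono : ‖a k‖ ≤ ‖a (k + 1)‖ := by nlinarith [norm_nonneg (a k)]
    have hrev := norm_sub_norm_le (lam * a (k + 1)) (a k)
    rw [norm_mul] at hrev
    rw [hrec k]
    linarith

theorem pow_mul_norm_le_norm_of_recurrence (hlam : 2 ≤ ‖lam‖) (ht : ‖t‖ ≤ 1)
    (h1 : a 1 = (lam + t) * a 0) (hrec : ∀ n, a (n + 2) = lam * a (n + 1) - a n) (n : ℕ) :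
    (‖lam‖ - 1) ^ n * ‖a 0‖ ≤ ‖a n‖ := by
  induction n with
  | zero => simp
  | succ k ih =>
    calc (‖lam‖ - 1) ^ (k + 1) * ‖a 0‖
        = (‖lam‖ - 1) * ((‖lam‖ - 1) ^ k * ‖a 0‖) := by ring
      _ ≤ (‖lam‖ - 1) * ‖a k‖ := mul_le_mul_of_nonneg_left ih (by linarith)
      _ ≤ ‖a (k + 1)‖ := mul_norm_le_norm_succ_of_recurrence hlam ht h1 hrec k

theorem eq_zero_of_recurrence_of_bounded (hlam : 2 < ‖lam‖) (ht : ‖t‖ ≤ 1)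
    (h1 : a 1 = (lam + t) * a 0) (hrec : ∀ n, a (n + 2) = lam * a (n + 1) - a n)
    {M : ℝ} (hM : ∀ n, ‖a n‖ ≤ M) : a = 0 := by
  have ha0 : a 0 = 0 := by
    by_contra ha0
    have hpos : 0 < ‖a 0‖ := norm_pos_iff.mpr ha0
    obtain ⟨n, hn⟩ := pow_unbounded_of_one_lt (M / ‖a 0‖) (by linarith : 1 < ‖lam‖ - 1)
    rw [div_lt_iff₀ hpos] at hn
    linarith [pow_mul_norm_le_norm_of_recurrence hlam.le ht h1 hrec n, hM n]
  have ha1 : a 1 = 0 := by rw [h1, ha0, mul_zero]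
  suffices ∀ n, a n = 0 from funext this
  intro n
  induction n using Nat.twoStepInduction with
  | zero => exact ha0
  | one => exact ha1
  | more k hk hk1 => rw [hrec k, hk, hk1, mul_zero, sub_zero]

end Recurrence

theorem inner_ξ_left (n : ℕ) (w : H) : inner ℂ (ξ n) w = w n := by
  simp [ξ, lp.inner_single_left]

theorem ξ_apply_succ_zero (m : ℕ) : ξ 0 (m + 1) = 0 := by
  simp [ξ, lp.single_apply]

theorem ξ_apply_succ_succ (n m : ℕ) : ξ (n + 1) (m + 1) = ξ n m := by
  simp [ξ, lp.single_apply, Pi.single_apply]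

theorem adjoint_apply_apply (T : H →L[ℂ] H) (w : H) (m : ℕ) :
    adjoint T w m = inner ℂ (T (ξ m)) w := by
  rw [← inner_ξ_left, adjoint_inner_right]

section Shift

variable {s : H →L[ℂ] H}

theorem adjoint_shift_apply (hs : ∀ n, s (ξ n) = ξ (n + 1)) (v : H) (n : ℕ) :
    adjoint s v n = v (n + 1) := by
  rw [adjoint_apply_apply, hs, inner_ξ_left]

theorem shift_apply_zero (hs : ∀ n, s (ξ n) = ξ (n + 1)) (v : H) : s v 0 = 0 := by
  have hξ : adjoint s (ξ 0) = 0 := by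
    ext m
    rw [adjoint_shift_apply hs, ξ_apply_succ_zero]
    rfl
  rw [← inner_ξ_left, ← adjoint_inner_left, hξ, inner_zero_left]

theorem shift_apply_succ (hs : ∀ n, s (ξ n) = ξ (n + 1)) (v : H) (n : ℕ) :
    s v (n + 1) = v n := by
  have hξ : adjoint s (ξ (n + 1)) = ξ n := by
    ext m
    rw [adjoint_shift_apply hs, ξ_apply_succ_succ]
  rw [← inner_ξ_left, ← adjoint_inner_left, hξ, inner_ξ_left]

end Shift

/-- If `δ > 1`, `s` is the unilateral shift on `ℓ²(ℕ,ℂ)` and `e` is the orthogonal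
projection onto the span of `ξ 0`, then every eigenvalue of
`y = s + s* − δ^{-1/2} e` has absolute value at most `2`. -/
theorem stmt1 (δ : ℝ) (hδ : 1 < δ) (s e : H →L[ℂ] H)
    (hs : ∀ n : ℕ, s (ξ n) = ξ (n + 1))
    (he : ∀ v : H, e v = (inner ℂ (ξ 0) v : ℂ) • ξ 0)
    (lam : ℂ) (v : H) (hv : v ≠ 0)
    (heig : (s + adjoint s - (((Real.sqrt δ)⁻¹ : ℝ) : ℂ) • e) v = lam • v) :
    ‖lam‖ ≤ 2 := by
  set t : ℝ := (Real.sqrt δ)⁻¹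
  have hcoord (n : ℕ) : s v n + adjoint s v n - t * e v n = lam * v n := by
    simpa only [sub_apply, add_apply, smul_apply, lp.coeFn_sub, lp.coeFn_add, lp.coeFn_smul,
      Pi.sub_apply, Pi.add_apply, Pi.smul_apply, smul_eq_mul] using
      congrArg (fun w : H => w n) heig
  have ht : ‖(t : ℂ)‖ ≤ 1 := by
    rw [Complex.norm_real, Real.norm_of_nonneg (by positivity)]
    exact inv_le_one_of_one_le₀ (Real.one_le_sqrt.mpr hδ.le)
  have h1 : v 1 = (lam + t) * v 0 := by
    have := hcoord 0
    rw [shift_apply_zero hs, adjoint_shift_apply hs, he, lp.coeFn_smul, Pi.smul_apply,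
      inner_ξ_left] at this
    simp only [ξ, lp.single_apply, Pi.single_eq_same, smul_eq_mul, mul_one] at this
    linear_combination this
  have hrec (n : ℕ) : v (n + 2) = lam * v (n + 1) - v n := by
    have := hcoord (n + 1)
    rw [shift_apply_succ hs, adjoint_shift_apply hs, he, lp.coeFn_smul, Pi.smul_apply,
      ξ_apply_succ_zero, smul_zero, mul_zero, sub_zero] at this
    linear_combination this
  by_contra hlam
  refine hv (lp.ext (eq_zero_of_recurrence_of_bounded (not_le.mp hlam) ht h1 hrec
    (lp.norm_apply_le_norm two_ne_zero v)))
end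
end

section
/- Let δ > 1 be real and y = s + s* − δ^{−1/2} e. Then the spectrum of y equals the spectrum of s + s*: spec(y) = spec(s + s*). -/
open ContinuousLinearMap

noncomputable section

/-!
Both operators are of the form `y_c = s + s* - c e` with `0 ≤ c ≤ 1`, and each has spectrum
`[-2, 2]`. Since `s` is an isometry, `Re ⟪(s + s*) v, v⟫ = ‖s v + v‖² - 2‖v‖² = 2‖v‖² - ‖s v - v‖²`,
and `‖s v + v‖ ≥ |v₀|` because `(s v)₀ = 0`; this absorbs the perturbation `-c |v₀|²`, so the
numerical range of the self-adjoint operator `y_c` lies in `[-2, 2]`, hence so does its spectrum.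
Conversely, for `t = r + r̄` with `|r| = 1`, the truncated geometric vectors `∑_{n ≤ N} rⁿ ξ n`
have norm `√(N + 1)`, while `t - y_c` maps them to a combination of `ξ 0`, `ξ N`, `ξ (N + 1)` of
norm at most `4`; so `t - y_c` is not bounded below.
-/

open scoped InnerProductSpace ComplexConjugate
open Set

lemma mem_spectrum_of_approximate_eigenvectors {E : Type*} [NormedAddCommGroup E]
    [NormedSpace ℂ E] (T : E →L[ℂ] E) (z : ℂ)
    (h : ∀ K : ℝ, 0 < K → ∃ v : E, K * ‖z • v - T v‖ < ‖v‖) : z ∈ spectrum ℂ T := by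
  by_contra hz
  rw [spectrum.notMem_iff] at hz
  set U := ContinuousLinearEquiv.unitsEquiv ℂ E hz.unit
  obtain ⟨v, hv⟩ := h (‖(U.symm : E →L[ℂ] E)‖ + 1) (by positivity)
  have hbound := (U : E →L[ℂ] E).bound_of_antilipschitz U.antilipschitz v
  have hUv : (U : E →L[ℂ] E) v = z • v - T v := by
    simp [U, Algebra.algebraMap_eq_smul_one]
  rw [hUv, coe_nnnorm] at hbound
  linarith [norm_nonneg (z • v - T v)]

section InnerProductSpace

variable {E : Type*} [NormedAddCommGroup E] [InnerProductSpace ℂ E]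

lemma re_inner_algebraMap_apply (z : ℂ) (v : E) :
    (⟪algebraMap ℂ (E →L[ℂ] E) z v, v⟫_ℂ).re = z.re * ‖v‖ ^ 2 := by
  simp [Algebra.algebraMap_eq_smul_one, ← Complex.ofReal_pow, mul_comm]

lemma re_inner_add_adjoint_apply_self [CompleteSpace E] (S : E →L[ℂ] E) (v : E) :
    (⟪(S + adjoint S) v, v⟫_ℂ).re = 2 * (⟪S v, v⟫_ℂ).re := by
  rw [add_apply, inner_add_left, Complex.add_re, adjoint_inner_left, ← inner_conj_symm,
    Complex.conj_re]
  ring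

lemma le_re_of_mem_spectrum [CompleteSpace E] {T : E →L[ℂ] E} {a : ℝ}
    (h : ∀ v, a * ‖v‖ ^ 2 ≤ (⟪T v, v⟫_ℂ).re) {z : ℂ} (hz : z ∈ spectrum ℂ T) : a ≤ z.re := by
  by_contra! hlt
  refine spectrum.mem_iff.mp hz ?_
  rw [IsUnit.sub_iff]
  refine isUnit_of_forall_le_norm_inner_map _ (c := ⟨a - z.re, by linarith⟩)
    (NNReal.coe_pos.mp (sub_pos.mpr hlt)) fun v => ?_
  calc ‖v‖ ^ 2 * (a - z.re)
      ≤ (⟪(T - algebraMap ℂ (E →L[ℂ] E) z) v, v⟫_ℂ).re := by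
        rw [sub_apply, inner_sub_left, Complex.sub_re, re_inner_algebraMap_apply]
        linarith [h v]
    _ ≤ ‖⟪(T - algebraMap ℂ (E →L[ℂ] E) z) v, v⟫_ℂ‖ := Complex.re_le_norm _

lemma IsSelfAdjoint.spectrum_subset_image_Icc [CompleteSpace E] {T : E →L[ℂ] E}
    (hT : IsSelfAdjoint T) {a b : ℝ} (ha : ∀ v, a * ‖v‖ ^ 2 ≤ (⟪T v, v⟫_ℂ).re)
    (hb : ∀ v, (⟪T v, v⟫_ℂ).re ≤ b * ‖v‖ ^ 2) :
    spectrum ℂ T ⊆ (↑) '' Icc a b := by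
  intro z hz
  have hneg : -z ∈ spectrum ℂ (-T) := by
    rw [← spectrum.neg_eq]
    exact Set.neg_mem_neg.mpr hz
  have hb' : ∀ v, -b * ‖v‖ ^ 2 ≤ (⟪(-T) v, v⟫_ℂ).re := fun v => by
    simpa [inner_neg_left] using hb v
  refine ⟨z.re, ⟨le_re_of_mem_spectrum ha hz, ?_⟩, (hT.mem_spectrum_eq_re hz).symm⟩
  simpa using le_re_of_mem_spectrum hb' hneg

end InnerProductSpace

lemma ξ_apply (n m : ℕ) : ξ n m = if m = n then 1 else 0 := by
  simp [ξ, lp.single_apply, Pi.single_apply]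

lemma inner_ξ_left_s2 (m : ℕ) (v : H) : ⟪ξ m, v⟫_ℂ = v m := by
  simpa [ξ] using lp.inner_single_left (𝕜 := ℂ) m (1 : ℂ) v

lemma norm_ξ (n : ℕ) : ‖ξ n‖ = 1 := by
  simp [ξ]

lemma re_inner_apply_self_of_proj {e : H →L[ℂ] H} (he : ∀ v : H, e v = ⟪ξ 0, v⟫_ℂ • ξ 0)
    (v : H) : (⟪e v, v⟫_ℂ).re = ‖v 0‖ ^ 2 := by
  rw [he, inner_smul_left, inner_ξ_left_s2, ← Complex.normSq_eq_conj_mul_self,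
    Complex.normSq_eq_norm_sq, Complex.ofReal_re]

lemma isSelfAdjoint_of_proj {e : H →L[ℂ] H} (he : ∀ v : H, e v = ⟪ξ 0, v⟫_ℂ • ξ 0) :
    IsSelfAdjoint e := by
  rw [isSelfAdjoint_iff_isSymmetric]
  intro u w
  simp only [coe_coe, he, inner_smul_left, inner_smul_right, inner_conj_symm, mul_comm]

def geomVec (r : ℂ) (N : ℕ) : H := ∑ n ∈ Finset.range N, r ^ n • ξ n

lemma geomVec_succ (r : ℂ) (N : ℕ) : geomVec r (N + 1) = geomVec r N + r ^ N • ξ N :=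
  Finset.sum_range_succ _ _

lemma norm_geomVec_sq {r : ℂ} (hr : ‖r‖ = 1) (N : ℕ) : ‖geomVec r N‖ ^ 2 = N := by
  have h := lp.norm_sum_single (p := 2) (by norm_num) (fun n : ℕ => r ^ n) (Finset.range N)
  simp only [ENNReal.toReal_ofNat, Real.rpow_two, norm_pow, hr, one_pow, Finset.sum_const,
    Finset.card_range, nsmul_eq_mul, mul_one] at h
  simpa [geomVec, ξ, ← lp.single_smul] using h

lemma exists_norm_eq_one_add_conj_eq {t : ℝ} (ht : t ∈ Icc (-2 : ℝ) 2) :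
    ∃ r : ℂ, ‖r‖ = 1 ∧ r + conj r = t := by
  have hsq : (t / 2) ^ 2 ≤ 1 := by nlinarith [ht.1, ht.2]
  refine ⟨⟨t / 2, √(1 - (t / 2) ^ 2)⟩, ?_, ?_⟩
  · rw [Complex.norm_def, Complex.normSq_mk, ← sq, ← sq, Real.sq_sqrt (by linarith)]
    simp
  · apply Complex.ext <;> simp

def IsShift (s : H →L[ℂ] H) : Prop := ∀ n, s (ξ n) = ξ (n + 1)

namespace IsShift

variable {s e : H →L[ℂ] H}

lemma adjoint_apply (hs : IsShift s) (v : H) (m : ℕ) : adjoint s v m = v (m + 1) := by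
  rw [← inner_ξ_left_s2, adjoint_inner_right, hs, inner_ξ_left_s2]

lemma adjoint_ξ_zero (hs : IsShift s) : adjoint s (ξ 0) = 0 := by
  ext m
  simp [hs.adjoint_apply, ξ_apply]

lemma adjoint_ξ_succ (hs : IsShift s) (n : ℕ) : adjoint s (ξ (n + 1)) = ξ n := by
  ext m
  simp [hs.adjoint_apply, ξ_apply]

lemma apply_zero (hs : IsShift s) (v : H) : s v 0 = 0 := by
  rw [← inner_ξ_left_s2, ← adjoint_inner_left, hs.adjoint_ξ_zero, inner_zero_left]

lemma adjoint_comp_self (hs : IsShift s) : adjoint s ∘L s = 1 := by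
  ext1 v
  ext m
  rw [comp_apply, hs.adjoint_apply, ← inner_ξ_left_s2, ← adjoint_inner_left, hs.adjoint_ξ_succ,
    inner_ξ_left_s2, one_apply_eq_self]

lemma norm_apply (hs : IsShift s) (v : H) : ‖s v‖ = ‖v‖ :=
  (norm_map_iff_adjoint_comp_self s).mpr hs.adjoint_comp_self v

lemma re_inner_apply_self_mem_Icc (hs : IsShift s) (he : ∀ v : H, e v = ⟪ξ 0, v⟫_ℂ • ξ 0)
    {c : ℝ} (hc0 : 0 ≤ c) (hc1 : c ≤ 1) (v : H) :
    (⟪(s + adjoint s - (c : ℂ) • e) v, v⟫_ℂ).re ∈ Icc (-2 * ‖v‖ ^ 2) (2 * ‖v‖ ^ 2) := by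
  have hre : (⟪(s + adjoint s - (c : ℂ) • e) v, v⟫_ℂ).re
      = 2 * (⟪s v, v⟫_ℂ).re - c * ‖v 0‖ ^ 2 := by
    rw [sub_apply, inner_sub_left, Complex.sub_re, re_inner_add_adjoint_apply_self, smul_apply,
      inner_smul_left, Complex.conj_ofReal, Complex.re_ofReal_mul, re_inner_apply_self_of_proj he]
  have hadd := norm_add_sq (𝕜 := ℂ) (s v) v
  have hsub := norm_sub_sq (𝕜 := ℂ) (s v) v
  rw [hs.norm_apply, RCLike.re_to_complex] at hadd hsub
  have hcoord : ‖v 0‖ ≤ ‖s v + v‖ := by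
    simpa [hs.apply_zero] using lp.norm_apply_le_norm two_ne_zero (s v + v) 0
  have hcv : c * ‖v 0‖ ^ 2 ≤ ‖v 0‖ ^ 2 := mul_le_of_le_one_left (sq_nonneg _) hc1
  rw [hre]
  constructor
  · nlinarith [pow_le_pow_left₀ (norm_nonneg _) hcoord 2]
  · nlinarith [sq_nonneg ‖s v - v‖, mul_nonneg hc0 (sq_nonneg ‖v 0‖)]

lemma isSelfAdjoint_add_adjoint_sub_smul (he : ∀ v : H, e v = ⟪ξ 0, v⟫_ℂ • ξ 0) (c : ℝ) :
    IsSelfAdjoint (s + adjoint s - (c : ℂ) • e) := by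
  have hc : IsSelfAdjoint (c : ℂ) := Complex.conj_ofReal c
  rw [← star_eq_adjoint]
  exact (IsSelfAdjoint.add_star_self s).sub (hc.smul (isSelfAdjoint_of_proj he))

lemma spectrum_subset (hs : IsShift s) (he : ∀ v : H, e v = ⟪ξ 0, v⟫_ℂ • ξ 0) {c : ℝ}
    (hc0 : 0 ≤ c) (hc1 : c ≤ 1) :
    spectrum ℂ (s + adjoint s - (c : ℂ) • e) ⊆ (↑) '' Icc (-2 : ℝ) 2 :=
  (isSelfAdjoint_add_adjoint_sub_smul he c).spectrum_subset_image_Icc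
    (fun v => (hs.re_inner_apply_self_mem_Icc he hc0 hc1 v).1)
    (fun v => (hs.re_inner_apply_self_mem_Icc he hc0 hc1 v).2)

lemma geomVec_succ_eq_add_smul_apply (hs : IsShift s) (r : ℂ) (N : ℕ) :
    geomVec r (N + 1) = ξ 0 + r • s (geomVec r N) := by
  simp [geomVec, Finset.sum_range_succ', Finset.smul_sum, hs _, smul_smul, pow_succ', add_comm]

lemma adjoint_geomVec_succ (hs : IsShift s) (r : ℂ) (N : ℕ) :
    adjoint s (geomVec r (N + 1)) = r • geomVec r N := by
  simp [geomVec, Finset.sum_range_succ', Finset.smul_sum, hs.adjoint_ξ_succ, hs.adjoint_ξ_zero,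
    smul_smul, pow_succ']

lemma geomVec_succ_apply_zero (hs : IsShift s) (r : ℂ) (N : ℕ) : geomVec r (N + 1) 0 = 1 := by
  rw [hs.geomVec_succ_eq_add_smul_apply, lp.coeFn_add, lp.coeFn_smul, Pi.add_apply,
    Pi.smul_apply, hs.apply_zero, ξ_apply]
  simp

lemma add_conj_smul_geomVec_sub_apply (hs : IsShift s) (he : ∀ v : H, e v = ⟪ξ 0, v⟫_ℂ • ξ 0)
    {r : ℂ} (hr : conj r * r = 1) (c : ℂ) (N : ℕ) :
    (r + conj r) • geomVec r (N + 1) - (s + adjoint s - c • e) (geomVec r (N + 1))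
      = (conj r + c) • ξ 0 + r ^ (N + 1) • ξ N - r ^ N • ξ (N + 1) := by
  set v := geomVec r (N + 1) with hv
  have hsv : s v = conj r • (v + r ^ (N + 1) • ξ (N + 1) - ξ 0) := by
    rw [← geomVec_succ, hs.geomVec_succ_eq_add_smul_apply r (N + 1), add_sub_cancel_left,
      smul_smul, hr, one_smul]
  have hadj : adjoint s v = r • (v - r ^ N • ξ N) := by
    rw [hs.adjoint_geomVec_succ, hv, geomVec_succ, add_sub_cancel_right]
  have hev : e v = ξ 0 := by
    rw [he, inner_ξ_left_s2, hs.geomVec_succ_apply_zero, one_smul]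
  rw [sub_apply, add_apply, smul_apply, hsv, hadj, hev]
  linear_combination (norm := module) (-r ^ N) • hr • ξ (N + 1)

lemma norm_add_conj_smul_geomVec_sub_apply_le (hs : IsShift s)
    (he : ∀ v : H, e v = ⟪ξ 0, v⟫_ℂ • ξ 0) {r : ℂ} (hr : ‖r‖ = 1) {c : ℝ} (hc0 : 0 ≤ c)
    (hc1 : c ≤ 1) (N : ℕ) :
    ‖(r + conj r) • geomVec r (N + 1) - (s + adjoint s - (c : ℂ) • e) (geomVec r (N + 1))‖
      ≤ 4 := by
  have hconj : conj r * r = 1 := by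
    rw [← Complex.normSq_eq_conj_mul_self, Complex.normSq_eq_norm_sq, hr, one_pow,
      Complex.ofReal_one]
  have hcoeff : ‖conj r + c‖ ≤ 2 :=
    calc ‖conj r + c‖ ≤ ‖conj r‖ + ‖(c : ℂ)‖ := norm_add_le _ _
      _ ≤ 2 := by rw [RCLike.norm_conj, hr, Complex.norm_real, Real.norm_of_nonneg hc0]; linarith
  rw [hs.add_conj_smul_geomVec_sub_apply he hconj]
  calc ‖(conj r + c) • ξ 0 + r ^ (N + 1) • ξ N - r ^ N • ξ (N + 1)‖
      ≤ ‖(conj r + c) • ξ 0‖ + ‖r ^ (N + 1) • ξ N‖ + ‖r ^ N • ξ (N + 1)‖ :=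
        (norm_sub_le _ _).trans (add_le_add_left (norm_add_le _ _) _)
    _ ≤ 4 := by simp only [norm_smul, norm_ξ, norm_pow, hr, one_pow, mul_one]; linarith

lemma subset_spectrum (hs : IsShift s) (he : ∀ v : H, e v = ⟪ξ 0, v⟫_ℂ • ξ 0) {c : ℝ}
    (hc0 : 0 ≤ c) (hc1 : c ≤ 1) :
    (↑) '' Icc (-2 : ℝ) 2 ⊆ spectrum ℂ (s + adjoint s - (c : ℂ) • e) := by
  rintro _ ⟨t, ht, rfl⟩
  obtain ⟨r, hr, hrt⟩ := exists_norm_eq_one_add_conj_eq ht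
  refine mem_spectrum_of_approximate_eigenvectors _ _ fun K hK => ?_
  obtain ⟨N, hN⟩ := exists_nat_gt ((4 * K) ^ 2)
  refine ⟨geomVec r (N + 1), ?_⟩
  have hres := hs.norm_add_conj_smul_geomVec_sub_apply_le he hr hc0 hc1 N
  rw [hrt] at hres
  have hlarge : 4 * K < ‖geomVec r (N + 1)‖ := by
    refine lt_of_pow_lt_pow_left₀ 2 (norm_nonneg _) ?_
    rw [norm_geomVec_sq hr]
    push_cast
    linarith
  linarith [mul_le_mul_of_nonneg_left hres hK.le]

theorem spectrum_add_adjoint_sub_smul (hs : IsShift s) (he : ∀ v : H, e v = ⟪ξ 0, v⟫_ℂ • ξ 0)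
    {c : ℝ} (hc0 : 0 ≤ c) (hc1 : c ≤ 1) :
    spectrum ℂ (s + adjoint s - (c : ℂ) • e) = (↑) '' Icc (-2 : ℝ) 2 :=
  (hs.spectrum_subset he hc0 hc1).antisymm (hs.subset_spectrum he hc0 hc1)

end IsShift

/-- If `δ > 1`, `s` is the unilateral shift on `ℓ²(ℕ,ℂ)` and `e` is the orthogonal
projection onto the span of `ξ 0`, then the spectrum of `y = s + s* − δ^{-1/2} e`
equals the spectrum of `s + s*`. -/
theorem stmt2 (δ : ℝ) (hδ : 1 < δ) (s e : H →L[ℂ] H)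
    (hs : ∀ n : ℕ, s (ξ n) = ξ (n + 1))
    (he : ∀ v : H, e v = (inner ℂ (ξ 0) v : ℂ) • ξ 0) :
    spectrum ℂ (s + adjoint s - (((Real.sqrt δ)⁻¹ : ℝ) : ℂ) • e)
      = spectrum ℂ (s + adjoint s) := by
  have hc0 : 0 ≤ (√δ)⁻¹ := by positivity
  have hc1 : (√δ)⁻¹ ≤ 1 := inv_le_one_of_one_le₀ (Real.one_le_sqrt.mpr hδ.le)
  rw [IsShift.spectrum_add_adjoint_sub_smul hs he hc0 hc1,
    ← IsShift.spectrum_add_adjoint_sub_smul hs he le_rfl zero_le_one]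
  simp
end
end

section
/- If T is a compact operator on H (in particular, if T is Hilbert–Schmidt) that commutes with s + s*, i.e. T ∘ (s + s*) = (s + s*) ∘ T, then T = 0. -/
open ContinuousLinearMap

noncomputable section

/-!
Put `C = s⋆T - Ts`. Commuting with `s + s⋆` means `C = Ts⋆ - sT` as well, and together with
`s⋆s = 1` this gives `s⋆Cs = C`, so `‖C ξₙ‖ ≤ ‖C ξₙ₊₁‖`. A compact operator sends the weakly
null sequence `ξₙ` to a norm-null one, so `C ξₙ → 0` and hence `C = 0`. Then
`s (T ξ₀) = T (s⋆ ξ₀) = 0` gives `T ξ₀ = 0`, and `T ξₙ₊₁ = s⋆ (T ξₙ)` propagates this to the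
whole basis.
-/

open Filter Topology
open scoped InnerProductSpace

section Ring

variable {R : Type*} [Ring R] {a b t : R}

theorem sub_eq_sub_of_commute_add (h : Commute t (a + b)) : b * t - t * a = t * b - a * t := by
  rw [sub_eq_sub_iff_add_eq_add, add_comm (t * b)]
  simpa only [mul_add, add_mul, add_comm] using h.eq.symm

theorem mul_sub_mul_mul_eq_of_commute_add (hba : b * a = 1) (h : Commute t (a + b)) :
    b * (b * t - t * a) * a = b * t - t * a := by
  calc b * (b * t - t * a) * a = b * (t * b - a * t) * a := by rw [sub_eq_sub_of_commute_add h]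
    _ = b * t * (b * a) - (b * a) * t * a := by noncomm_ring
    _ = b * t - t * a := by rw [hba, one_mul, mul_one]

end Ring

section Contraction

variable {𝕜 E : Type*} [NontriviallyNormedField 𝕜] [NormedAddCommGroup E] [NormedSpace 𝕜 E]

theorem ContinuousLinearMap.apply_eq_zero_of_conj_eq_self {a b c : E →L[𝕜] E} (hb : ‖b‖ ≤ 1)
    (hc : b * c * a = c) {e : ℕ → E} (he : ∀ n, a (e n) = e (n + 1))
    (hlim : Tendsto (fun n => c (e n)) atTop (𝓝 0)) (n : ℕ) : c (e n) = 0 := by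
  have hstep : ∀ n, ‖c (e n)‖ ≤ ‖c (e (n + 1))‖ := fun n =>
    calc ‖c (e n)‖ = ‖b (c (a (e n)))‖ := congrArg norm (DFunLike.congr_fun hc (e n)).symm
      _ ≤ ‖c (e (n + 1))‖ := by rw [he]; exact (b.le_of_opNorm_le hb _).trans_eq (one_mul _)
  have hmono : Monotone fun n => ‖c (e n)‖ := monotone_nat_of_le_succ hstep
  exact norm_le_zero_iff.mp (hmono.ge_of_tendsto (by simpa using hlim.norm) n)

end Contraction

section Hilbert

variable {𝕜 E F : Type*} [RCLike 𝕜] [NormedAddCommGroup E] [InnerProductSpace 𝕜 E]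
  [NormedAddCommGroup F] [InnerProductSpace 𝕜 F]

theorem Orthonormal.tendsto_inner_zero {ι : Type*} {v : ι → E} (hv : Orthonormal 𝕜 v) (x : E) :
    Tendsto (fun i => ⟪x, v i⟫_𝕜) cofinite (𝓝 0) := by
  rw [tendsto_zero_iff_norm_tendsto_zero]
  simpa [norm_inner_symm] using (hv.inner_products_summable (x := x)).tendsto_cofinite_zero.sqrt

theorem IsCompactOperator.tendsto_apply_orthonormal [CompleteSpace E] [CompleteSpace F]
    {T : E →L[𝕜] F} (hT : IsCompactOperator T) {e : ℕ → E} (he : Orthonormal 𝕜 e) :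
    Tendsto (fun n => T (e n)) atTop (𝓝 0) := by
  obtain ⟨K, hK, hTK⟩ := hT.image_closedBall_subset_compact (f := (T : E →ₗ[𝕜] F)) 1
  have hmem : ∀ n, T (e n) ∈ K := fun n => hTK ⟨e n, by simp [he.1 n], rfl⟩
  refine tendsto_of_subseq_tendsto fun ns hns => ?_
  obtain ⟨a, -, φ, hφ, hlim⟩ := hK.tendsto_subseq fun k => hmem (ns k)
  have hweak : Tendsto (fun k => ⟪a, T (e (ns (φ k)))⟫_𝕜) atTop (𝓝 0) := by
    simp_rw [← adjoint_inner_left]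
    have hnull := he.tendsto_inner_zero (adjoint T a)
    rw [Nat.cofinite_eq_atTop] at hnull
    exact hnull.comp (hns.comp hφ.tendsto_atTop)
  have ha : a = 0 :=
    inner_self_eq_zero.mp (tendsto_nhds_unique (tendsto_const_nhds.inner hlim) hweak)
  exact ⟨φ, ha ▸ hlim⟩

namespace HilbertBasis

variable {ι : Type*} (b : HilbertBasis ι 𝕜 E)

theorem ext_inner {x y : E} (h : ∀ i, ⟪b i, x⟫_𝕜 = ⟪b i, y⟫_𝕜) : x = y :=
  b.repr.injective <| lp.ext <| funext fun i => by
    rw [b.repr_apply_apply, b.repr_apply_apply, h i]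

theorem ext_continuousLinearMap {f g : E →L[𝕜] F} (h : ∀ i, f (b i) = g (b i)) : f = g :=
  ContinuousLinearMap.ext_on (Submodule.dense_iff_topologicalClosure_eq_top.mpr b.dense_span)
    (by rintro _ ⟨i, rfl⟩; exact h i)

section Shift

variable [CompleteSpace E] (b : HilbertBasis ℕ 𝕜 E) {s : E →L[𝕜] E}

theorem adjoint_shift_apply_succ (hs : ∀ n, s (b n) = b (n + 1)) (n : ℕ) :
    adjoint s (b (n + 1)) = b n :=
  b.ext_inner fun m => by simp [adjoint_inner_right, hs, orthonormal_iff_ite.mp b.orthonormal]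

theorem adjoint_shift_apply_zero (hs : ∀ n, s (b n) = b (n + 1)) : adjoint s (b 0) = 0 :=
  b.ext_inner fun m => by simp [adjoint_inner_right, hs, orthonormal_iff_ite.mp b.orthonormal]

theorem adjoint_shift_mul_self (hs : ∀ n, s (b n) = b (n + 1)) : adjoint s * s = 1 :=
  b.ext_continuousLinearMap fun n => by simp [hs, b.adjoint_shift_apply_succ hs]

theorem eq_zero_of_intertwines_shift (hs : ∀ n, s (b n) = b (n + 1)) {T : E →L[𝕜] E}
    (hleft : adjoint s * T = T * s) (hright : T * adjoint s = s * T) : T = 0 := by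
  have h0 : T (b 0) = 0 := by
    have hsT : s (T (b 0)) = T (adjoint s (b 0)) := (DFunLike.congr_fun hright (b 0)).symm
    rw [b.adjoint_shift_apply_zero hs, map_zero T] at hsT
    calc T (b 0) = adjoint s (s (T (b 0))) :=
          (DFunLike.congr_fun (b.adjoint_shift_mul_self hs) _).symm
      _ = 0 := by rw [hsT, map_zero (adjoint s)]
  refine b.ext_continuousLinearMap fun n => ?_
  induction n with
  | zero => simpa using h0
  | succ n ih =>
    calc T (b (n + 1)) = adjoint s (T (b n)) := by
          rw [← hs]; exact (DFunLike.congr_fun hleft (b n)).symm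
      _ = 0 := by rw [ih, zero_apply, map_zero]

theorem eq_zero_of_isCompactOperator_of_commute_shift_add_adjoint
    (hs : ∀ n, s (b n) = b (n + 1)) {T : E →L[𝕜] E} (hT : IsCompactOperator T)
    (hcomm : Commute T (s + adjoint s)) : T = 0 := by
  have hiso : adjoint s * s = 1 := b.adjoint_shift_mul_self hs
  have hnorm : ‖adjoint s‖ ≤ 1 := by
    rw [LinearIsometryEquiv.norm_map]
    exact opNorm_le_bound s zero_le_one fun x => by
      rw [(norm_map_iff_adjoint_comp_self s).mpr hiso x, one_mul]
  have hTb := hT.tendsto_apply_orthonormal b.orthonormal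
  have hC : adjoint s * T - T * s = 0 := by
    refine b.ext_continuousLinearMap fun n => ?_
    refine apply_eq_zero_of_conj_eq_self hnorm (mul_sub_mul_mul_eq_of_commute_add hiso hcomm) hs
      ?_ n
    simpa [hs] using (((adjoint s).continuous.tendsto 0).comp hTb).sub
      (hTb.comp (tendsto_add_atTop_nat 1))
  refine b.eq_zero_of_intertwines_shift hs (sub_eq_zero.mp hC) ?_
  rw [← sub_eq_zero, ← sub_eq_sub_of_commute_add hcomm, hC]

end Shift

end HilbertBasis

end Hilbert

theorem HilbertBasis.coe_default_eq_ξ : ⇑(default : HilbertBasis ℕ ℂ H) = ξ :=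
  funext fun n => ((default : HilbertBasis ℕ ℂ H).repr_symm_single n).symm

/-- If `s` is the unilateral shift on `ℓ²(ℕ,ℂ)` and `T` is a compact operator on `H`
commuting with `s + s*`, then `T = 0`. -/
theorem stmt10 (s : H →L[ℂ] H)
    (hs : ∀ n : ℕ, s (ξ n) = ξ (n + 1))
    (T : H →L[ℂ] H) (hT : IsCompactOperator (⇑T))
    (hcomm : T ∘L (s + adjoint s) = (s + adjoint s) ∘L T) :
    T = 0 :=
  (default : HilbertBasis ℕ ℂ H).eq_zero_of_isCompactOperator_of_commute_shift_add_adjoint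
    (by rwa [HilbertBasis.coe_default_eq_ξ]) hT hcomm

end
end

section
/- For every integer k ≥ 2, the following inequality holds: Σ_{u∈Γ_k} Σ_{w∈Γ_k} n(u,w)·γ_u·γ_w − Σ_{u∈Γ_k} γ_u² + Σ_{v∈B_k} (γ_v − α_v^{(k)})² ≥ (δ − 1) · Σ_{v∈Γ_{k−2}} γ_v². -/
/-!
Split the ball `Γ_k` into the interior `Γ_{k-1}`, on which the Perron–Frobenius equation turns
each term `γ_u α_u - γ_u²` into `(δ - 1) γ_u²`, and the sphere `S = Γ_k \ Γ_{k-1}`. On `S` write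
`α_u = β_u + σ_u`, the weights towards the layer `L = Γ_{k-1} \ Γ_{k-2}` and inside `S`; a
neighbour in `L` gives `γ_u ≤ δ β_u`. The vertices of `B` lie in `S` and are pairwise
non-adjacent. For `u ∈ B` the term `α_u (α_u - γ_u) + (1 - δ⁻¹) β_u γ_u` is at least `-σ_u t_u`
with `t_u = γ_u - α_u - β_u`, and redistributing `Σ_{u ∈ B} σ_u t_u` along the edges from `B`
to `S \ B` shows it is paid for by the surpluses `γ_w (α_w - γ_w)` of `S \ B`. What is left,
`-(1 - δ⁻¹) Σ_S β_u γ_u`, is at least `-(δ - 1) Σ_L γ_v²` by double counting the edges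
between `S` and `L`.
-/

open Finset

section

variable {V : Type*}

/-- For `T = Γ_k` this is the paper's `α_v^{(k)}`. -/
def weightTo (n : V → V → ℕ) (γ : V → ℝ) (T : Finset V) (v : V) : ℝ :=
  ∑ w ∈ T, (n v w : ℝ) * γ w

section WeightTo

variable {n : V → V → ℕ} {γ : V → ℝ} {T T' : Finset V} {u v w : V}

lemma weightTo_mono (hγ : ∀ v, 0 ≤ γ v) (h : T ⊆ T') : weightTo n γ T v ≤ weightTo n γ T' v :=
  sum_le_sum_of_subset_of_nonneg h fun w _ _ => mul_nonneg (Nat.cast_nonneg _) (hγ w)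

lemma weightTo_nonneg (hγ : ∀ v, 0 ≤ γ v) : 0 ≤ weightTo n γ T v :=
  weightTo_mono (T := ∅) hγ (empty_subset T)

lemma mul_le_weightTo (hγ : ∀ v, 0 ≤ γ v) (hw : w ∈ T) : (n v w : ℝ) * γ w ≤ weightTo n γ T v :=
  single_le_sum (f := fun w => (n v w : ℝ) * γ w)
    (fun w _ => mul_nonneg (Nat.cast_nonneg _) (hγ w)) hw

lemma le_weightTo_of_ne_zero (hγ : ∀ v, 0 ≤ γ v) (hw : w ∈ T) (h : n v w ≠ 0) :
    γ w ≤ weightTo n γ T v :=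
  (le_mul_of_one_le_left (hγ w) (mod_cast Nat.one_le_iff_ne_zero.2 h)).trans
    (mul_le_weightTo hγ hw)

lemma weightTo_sdiff_add [DecidableEq V] (h : T ⊆ T') :
    weightTo n γ (T' \ T) v + weightTo n γ T v = weightTo n γ T' v :=
  sum_sdiff h

lemma weightTo_eq_zero (h : ∀ w ∈ T, n v w = 0) : weightTo n γ T v = 0 :=
  sum_eq_zero fun w hw => by simp [h w hw]

lemma sum_mul_weightTo_comm (hsymm : ∀ v w, n v w = n w v) (f g : V → ℝ) (T T' : Finset V) :
    ∑ u ∈ T, f u * weightTo n g T' u = ∑ w ∈ T', g w * weightTo n f T w := by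
  simp only [weightTo, mul_sum]
  rw [sum_comm]
  refine sum_congr rfl fun w _ => sum_congr rfl fun u _ => ?_
  rw [hsymm]
  ring

lemma finsum_eq_weightTo (h : ∀ w, n v w ≠ 0 → w ∈ T) :
    ∑ᶠ w, (n v w : ℝ) * γ w = weightTo n γ T v :=
  finsum_eq_sum_of_support_subset _ fun w hw => h w fun h0 => hw (by simp [h0])

lemma weightTo_le_finsum [DecidableEq V] (hγ : ∀ v, 0 ≤ γ v) (hfin : {w | 1 ≤ n v w}.Finite) :
    weightTo n γ T v ≤ ∑ᶠ w, (n v w : ℝ) * γ w := by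
  rw [finsum_eq_weightTo (T := T ∪ hfin.toFinset) fun w hw =>
    mem_union_right _ (by simpa [Nat.one_le_iff_ne_zero] using hw)]
  exact weightTo_mono hγ subset_union_left

end WeightTo

section Sphere

variable {n : V → V → ℕ} {γ : V → ℝ} {δ : ℝ} {S B L T : Finset V} {u v w : V}

lemma le_mul_weightTo_of_ne_zero (hγ : ∀ v, 0 ≤ γ v) (hsymm : ∀ v w, n v w = n w v)
    (hδ : 0 ≤ δ) (hPF : ∀ v T, weightTo n γ T v ≤ δ * γ v) (hv : v ∈ T) (h : n u v ≠ 0) :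
    γ u ≤ δ * weightTo n γ T u :=
  calc γ u ≤ weightTo n γ {u} v :=
        le_weightTo_of_ne_zero hγ (mem_singleton_self u) (hsymm u v ▸ h)
    _ ≤ δ * γ v := hPF v {u}
    _ ≤ δ * weightTo n γ T u := mul_le_mul_of_nonneg_left (le_weightTo_of_ne_zero hγ hv h) hδ

lemma sum_mul_weightTo_le (hγ : ∀ v, 0 ≤ γ v) (hsymm : ∀ v w, n v w = n w v)
    (hPF : ∀ v T, weightTo n γ T v ≤ δ * γ v) (S L : Finset V) :
    ∑ u ∈ S, γ u * weightTo n γ L u ≤ δ * ∑ v ∈ L, γ v ^ 2 := by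
  rw [sum_mul_weightTo_comm hsymm, mul_sum]
  refine sum_le_sum fun v _ => ?_
  nlinarith [mul_le_mul_of_nonneg_left (hPF v S) (hγ v)]

lemma eq_zero_of_weightTo_lt (hγ : ∀ v, 0 ≤ γ v) (hsymm : ∀ v w, n v w = n w v)
    (hu : u ∈ S) (hw : w ∈ S) (hu' : weightTo n γ S u < γ u) (hw' : weightTo n γ S w < γ w) :
    n u w = 0 := by
  by_contra h
  have := le_weightTo_of_ne_zero hγ hw h
  have := le_weightTo_of_ne_zero hγ hu (hsymm u w ▸ h)
  linarith

lemma sum_mul_weightTo_eq_of_indep [DecidableEq V] (hsymm : ∀ v w, n v w = n w v)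
    (hBS : B ⊆ S) (hind : ∀ u ∈ B, ∀ w ∈ B, n u w = 0) (t : V → ℝ) :
    ∑ u ∈ B, t u * weightTo n γ S u = ∑ w ∈ S \ B, γ w * weightTo n t B w := by
  rw [← sum_mul_weightTo_comm hsymm t γ B (S \ B)]
  refine sum_congr rfl fun u hu => ?_
  rw [← weightTo_sdiff_add hBS, weightTo_eq_zero (hind u hu), add_zero]

lemma weightTo_le_sub_of_deficit (hγ : ∀ v, 0 ≤ γ v) (hsymm : ∀ v w, n v w = n w v)
    {t : V → ℝ} {a : ℝ} (hBS : B ⊆ S) (hw : w ∈ S)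
    (ht : ∀ u ∈ B, t u ≤ γ u - weightTo n γ S u) (hγw : γ w ≤ a) (hSa : weightTo n γ S w ≤ a) :
    weightTo n t B w ≤ a - γ w := by
  by_cases hB : ∀ u ∈ B, n w u = 0
  · rw [weightTo_eq_zero hB]
    linarith
  push Not at hB
  obtain ⟨u₀, hu₀, hne⟩ := hB
  have hterm : ∀ u ∈ B, (n w u : ℝ) * t u ≤ (n w u : ℝ) * γ u - (n w u : ℝ) * γ w := by
    intro u hu
    have h1 : t u ≤ γ u - (n u w : ℝ) * γ w := by
      linarith [ht u hu, mul_le_weightTo (n := n) (v := u) hγ hw]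
    have h2 : (n w u : ℝ) ≤ (n w u : ℝ) * (n u w : ℝ) := by
      rw [hsymm u w]
      exact_mod_cast Nat.le_mul_self _
    linarith [mul_le_mul_of_nonneg_left h1 (Nat.cast_nonneg (α := ℝ) (n w u)),
      mul_le_mul_of_nonneg_right h2 (hγ w)]
  calc weightTo n t B w ≤ weightTo n γ B w - weightTo n (fun _ => γ w) B w := by
        rw [weightTo, weightTo, weightTo, ← sum_sub_distrib]
        exact sum_le_sum hterm
    _ ≤ weightTo n γ S w - γ w := by
        linarith [weightTo_mono (n := n) (v := w) hγ hBS,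
          le_weightTo_of_ne_zero (γ := fun _ => γ w) (fun _ => hγ w) hu₀ hne]
    _ ≤ a - γ w := by linarith

lemma neg_mul_sub_le_mul_sub {A β σ g : ℝ} (hδ : 0 < δ) (hβ : 0 ≤ β) (hg : g ≤ δ * β)
    (hA : A = β + σ) :
    -((g - A - β) * σ) - (1 - δ⁻¹) * (g * β) ≤ A * (A - g) := by
  have key : A * (A - g) - (-((g - A - β) * σ) - (1 - δ⁻¹) * (g * β)) = β * (β - g / δ) := by
    rw [hA]; field_simp; ring
  have : g / δ ≤ β := by rw [div_le_iff₀ hδ]; linarith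
  linarith [mul_nonneg hβ (sub_nonneg.2 this)]

theorem neg_sum_mul_weightTo_le_sum_sphere [DecidableEq V] (hδ : 1 ≤ δ) (hγ : ∀ v, 0 ≤ γ v)
    (hsymm : ∀ v w, n v w = n w v) {A : V → ℝ}
    (hA : ∀ u ∈ S, A u = weightTo n γ L u + weightTo n γ S u)
    (hparent : ∀ u ∈ S, γ u ≤ δ * weightTo n γ L u) :
    -((1 - δ⁻¹) * ∑ u ∈ S, γ u * weightTo n γ L u) ≤
      ∑ u ∈ S with ¬A u < γ u, γ u * (A u - γ u) + ∑ u ∈ S with A u < γ u, A u * (A u - γ u) := by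
  set B := S.filter fun u => A u < γ u
  set t : V → ℝ := fun u => γ u - A u - weightTo n γ L u
  have hBS : B ⊆ S := filter_subset _ S
  have hS_lt : ∀ u ∈ B, weightTo n γ S u < γ u := fun u hu => by
    obtain ⟨huS, hlt⟩ := mem_filter.1 hu
    linarith [hA u huS, weightTo_nonneg (n := n) (T := L) (v := u) hγ]
  have hind : ∀ u ∈ B, ∀ w ∈ B, n u w = 0 := fun u hu w hw =>
    eq_zero_of_weightTo_lt hγ hsymm (hBS hu) (hBS hw) (hS_lt u hu) (hS_lt w hw)
  have hdeficit : ∀ u ∈ B, -(t u * weightTo n γ S u) - (1 - δ⁻¹) * (γ u * weightTo n γ L u)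
      ≤ A u * (A u - γ u) := fun u hu =>
    neg_mul_sub_le_mul_sub (zero_lt_one.trans_le hδ) (weightTo_nonneg hγ) (hparent u (hBS hu))
      (hA u (hBS hu))
  have hsurplus : ∀ w ∈ S \ B, γ w * weightTo n t B w ≤ γ w * (A w - γ w) := by
    intro w hw
    obtain ⟨hwS, hwB⟩ := mem_sdiff.1 hw
    have hle : γ w ≤ A w := not_lt.1 fun h => hwB (mem_filter.2 ⟨hwS, h⟩)
    refine mul_le_mul_of_nonneg_left ?_ (hγ w)
    refine weightTo_le_sub_of_deficit hγ hsymm hBS hwS (fun u hu => ?_) hle ?_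
    · linarith [hA u (hBS hu), weightTo_nonneg (n := n) (T := L) (v := u) hγ]
    · linarith [hA w hwS, weightTo_nonneg (n := n) (T := L) (v := w) hγ]
  have hledger := sum_mul_weightTo_eq_of_indep (γ := γ) hsymm hBS hind t
  have hBsub : ∑ u ∈ B, γ u * weightTo n γ L u ≤ ∑ u ∈ S, γ u * weightTo n γ L u :=
    sum_le_sum_of_subset_of_nonneg hBS fun u _ _ => mul_nonneg (hγ u) (weightTo_nonneg hγ)
  have hc : 0 ≤ 1 - δ⁻¹ := sub_nonneg.2 (inv_le_one_of_one_le₀ hδ)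
  have hsurplus_sum := sum_le_sum hsurplus
  have hdeficit_sum := sum_le_sum hdeficit
  rw [sum_sub_distrib, sum_neg_distrib, ← mul_sum] at hdeficit_sum
  rw [filter_not]
  linarith [mul_le_mul_of_nonneg_left hBsub hc]

end Sphere

lemma sum_mul_sub_sum_sq_add_sum_filter_eq [DecidableEq V] (A γ : V → ℝ) {Γ I : Finset V}
    (hIΓ : I ⊆ Γ) (hI : ∀ u ∈ I, ¬A u < γ u) :
    ∑ u ∈ Γ, γ u * A u - ∑ u ∈ Γ, γ u ^ 2 + ∑ u ∈ Γ with A u < γ u, (γ u - A u) ^ 2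
      = ∑ u ∈ I, (γ u * A u - γ u ^ 2) + ∑ u ∈ Γ \ I with ¬A u < γ u, γ u * (A u - γ u)
        + ∑ u ∈ Γ \ I with A u < γ u, A u * (A u - γ u) := by
  have hB : Γ.filter (fun u => A u < γ u) = (Γ \ I).filter (fun u => A u < γ u) := by
    refine (filter_subset_filter _ sdiff_subset).antisymm' fun u hu => ?_
    obtain ⟨huΓ, hlt⟩ := mem_filter.1 hu
    exact mem_filter.2 ⟨mem_sdiff.2 ⟨huΓ, fun huI => hI u huI hlt⟩, hlt⟩
  rw [hB, ← sum_sub_distrib, ← sum_sdiff hIΓ,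
    ← sum_filter_add_sum_filter_not (Γ \ I) (fun u => A u < γ u)]
  have hlt : ∑ u ∈ Γ \ I with A u < γ u, (γ u * A u - γ u ^ 2)
      + ∑ u ∈ Γ \ I with A u < γ u, (γ u - A u) ^ 2
      = ∑ u ∈ Γ \ I with A u < γ u, A u * (A u - γ u) := by
    rw [← sum_add_distrib]
    exact sum_congr rfl fun _ _ => by ring
  have hnlt : ∑ u ∈ Γ \ I with ¬A u < γ u, (γ u * A u - γ u ^ 2)
      = ∑ u ∈ Γ \ I with ¬A u < γ u, γ u * (A u - γ u) :=
    sum_congr rfl fun _ _ => by ring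
  linarith

theorem sub_one_mul_sum_sq_le_of_layers [DecidableEq V] {n : V → V → ℕ} {γ : V → ℝ} {δ : ℝ}
    (hδ : 1 ≤ δ) (hγ : ∀ v, 0 ≤ γ v) (hsymm : ∀ v w, n v w = n w v) {Γ I C : Finset V}
    (hCI : C ⊆ I) (hIΓ : I ⊆ Γ) (hPF : ∀ v T, weightTo n γ T v ≤ δ * γ v)
    (hinterior : ∀ v ∈ I, weightTo n γ Γ v = δ * γ v)
    (hsep : ∀ u ∈ Γ \ I, ∀ w ∈ C, n u w = 0)
    (hparent : ∀ u ∈ Γ \ I, γ u ≤ δ * weightTo n γ (I \ C) u) :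
    (δ - 1) * ∑ v ∈ C, γ v ^ 2 ≤
      (∑ u ∈ Γ, ∑ w ∈ Γ, (n u w : ℝ) * γ u * γ w) - ∑ u ∈ Γ, γ u ^ 2
        + ∑ u ∈ Γ with weightTo n γ Γ u < γ u, (γ u - weightTo n γ Γ u) ^ 2 := by
  have hA : ∀ u ∈ Γ \ I,
      weightTo n γ Γ u = weightTo n γ (I \ C) u + weightTo n γ (Γ \ I) u := fun u hu => by
    rw [← weightTo_sdiff_add hIΓ, ← weightTo_sdiff_add hCI, weightTo_eq_zero (hsep u hu)]
    ring
  have hsphere := neg_sum_mul_weightTo_le_sum_sphere hδ hγ hsymm hA hparent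
  have hlayer := sum_mul_weightTo_le hγ hsymm hPF (Γ \ I) (I \ C)
  have hinterior' : ∀ u ∈ I, ¬weightTo n γ Γ u < γ u := fun u hu => by
    rw [hinterior u hu]
    nlinarith [hγ u]
  have hI : ∑ u ∈ I, (γ u * weightTo n γ Γ u - γ u ^ 2) = (δ - 1) * ∑ u ∈ I, γ u ^ 2 := by
    rw [mul_sum]
    exact sum_congr rfl fun u hu => by rw [hinterior u hu]; ring
  have hpair : ∑ u ∈ Γ, ∑ w ∈ Γ, (n u w : ℝ) * γ u * γ w = ∑ u ∈ Γ, γ u * weightTo n γ Γ u :=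
    sum_congr rfl fun u _ => by rw [weightTo, mul_sum]; exact sum_congr rfl fun _ _ => by ring
  have hcδ : (1 - δ⁻¹) * δ = δ - 1 := by field_simp
  have hc : 0 ≤ 1 - δ⁻¹ := sub_nonneg.2 (inv_le_one_of_one_le₀ hδ)
  calc (δ - 1) * ∑ v ∈ C, γ v ^ 2
      = (δ - 1) * ∑ u ∈ I, γ u ^ 2 - (1 - δ⁻¹) * (δ * ∑ v ∈ I \ C, γ v ^ 2) := by
        rw [← sum_sdiff hCI, ← mul_assoc, hcδ]; ring
    _ ≤ (δ - 1) * ∑ u ∈ I, γ u ^ 2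
          - (1 - δ⁻¹) * ∑ u ∈ Γ \ I, γ u * weightTo n γ (I \ C) u := by gcongr
    _ ≤ _ := by
        rw [hpair, sum_mul_sub_sum_sq_add_sum_filter_eq _ γ hIΓ hinterior', hI]
        linarith

theorem sub_one_mul_sum_sq_le_of_levels [DecidableEq V] {n : V → V → ℕ} {d : V → ℕ}
    (hadj : ∀ u w, n u w ≠ 0 → d w ≤ d u + 1)
    (hparent : ∀ u m, d u = m + 1 → ∃ v, n u v ≠ 0 ∧ d v = m)
    (hsymm : ∀ v w, n v w = n w v) (hlocfin : ∀ v, {w | 1 ≤ n v w}.Finite)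
    (hball : ∀ j : ℕ, {v | d v ≤ j}.Finite) {δ : ℝ} (hδ : 1 ≤ δ) {γ : V → ℝ}
    (hγ : ∀ v, 0 ≤ γ v) (hPF : ∀ v, δ * γ v = ∑ᶠ w, (n v w : ℝ) * γ w) {k : ℕ} (hk : 2 ≤ k) :
    (δ - 1) * ∑ v ∈ (hball (k - 2)).toFinset, γ v ^ 2 ≤
      (∑ u ∈ (hball k).toFinset, ∑ w ∈ (hball k).toFinset, (n u w : ℝ) * γ u * γ w)
        - ∑ u ∈ (hball k).toFinset, γ u ^ 2
        + ∑ u ∈ (hball k).toFinset with weightTo n γ (hball k).toFinset u < γ u,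
            (γ u - weightTo n γ (hball k).toFinset u) ^ 2 := by
  have hmem : ∀ j v, v ∈ (hball j).toFinset ↔ d v ≤ j := fun j v => Set.Finite.mem_toFinset _
  have hmono : ∀ i j, i ≤ j → (hball i).toFinset ⊆ (hball j).toFinset := fun i j hij v hv => by
    rw [hmem] at hv ⊢
    omega
  have hPF' : ∀ v T, weightTo n γ T v ≤ δ * γ v := fun v T =>
    (hPF v).symm ▸ weightTo_le_finsum hγ (hlocfin v)
  refine sub_one_mul_sum_sq_le_of_layers hδ hγ hsymm (hmono (k - 2) (k - 1) (by omega))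
    (hmono (k - 1) k (by omega)) hPF' (fun v hv => ?_) (fun u hu w hw => ?_) (fun u hu => ?_)
  · rw [hPF v, finsum_eq_weightTo fun w hw => ?_]
    rw [hmem] at hv ⊢
    have := hadj v w hw
    omega
  · by_contra h
    have := hadj w u (hsymm u w ▸ h)
    simp only [mem_sdiff, hmem] at hu hw
    omega
  · simp only [mem_sdiff, hmem] at hu
    obtain ⟨v, hne, hv⟩ := hparent u (k - 1) (by omega)
    refine le_mul_weightTo_of_ne_zero hγ hsymm (by linarith) hPF' ?_ hne
    simp only [mem_sdiff, hmem]
    omega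

theorem sub_one_mul_finsum_sq_le_of_levels {n : V → V → ℕ} {d : V → ℕ}
    (hadj : ∀ u w, n u w ≠ 0 → d w ≤ d u + 1)
    (hparent : ∀ u m, d u = m + 1 → ∃ v, n u v ≠ 0 ∧ d v = m)
    (hsymm : ∀ v w, n v w = n w v) (hlocfin : ∀ v, {w | 1 ≤ n v w}.Finite)
    (hball : ∀ j : ℕ, {v | d v ≤ j}.Finite) {δ : ℝ} (hδ : 1 ≤ δ) {γ : V → ℝ}
    (hγ : ∀ v, 0 ≤ γ v) (hPF : ∀ v, δ * γ v = ∑ᶠ w, (n v w : ℝ) * γ w) {k : ℕ} (hk : 2 ≤ k) :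
    (δ - 1) * ∑ᶠ v ∈ {v | d v ≤ k - 2}, γ v ^ 2 ≤
      (∑ᶠ u ∈ {v | d v ≤ k}, ∑ᶠ w ∈ {v | d v ≤ k}, (n u w : ℝ) * γ u * γ w)
        - (∑ᶠ u ∈ {v | d v ≤ k}, γ u ^ 2)
        + (∑ᶠ v ∈ {v | d v ≤ k ∧ (∑ᶠ w ∈ {u | d u ≤ k}, (n v w : ℝ) * γ w) < γ v},
            (γ v - ∑ᶠ w ∈ {u | d u ≤ k}, (n v w : ℝ) * γ w) ^ 2) := by
  classical
  simp only [finsum_mem_eq_finite_toFinset_sum _ (hball _)]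
  have hB : {v | d v ≤ k ∧ ∑ w ∈ (hball k).toFinset, (n v w : ℝ) * γ w < γ v}
      = ↑((hball k).toFinset.filter fun v => weightTo n γ (hball k).toFinset v < γ v) := by
    ext v
    rw [mem_coe, mem_filter, Set.Finite.mem_toFinset]
    rfl
  rw [hB, finsum_mem_coe_finset]
  exact sub_one_mul_sum_sq_le_of_levels hadj hparent hsymm hlocfin hball hδ hγ hPF hk

lemma SimpleGraph.dist_le_dist_add_one_of_adj {G : SimpleGraph V} {u v w : V} (h : G.Adj v w) :
    G.dist u w ≤ G.dist u v + 1 := by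
  rcases h.diff_dist_adj (u := u) with h | h | h <;> omega

lemma SimpleGraph.Reachable.exists_adj_dist_eq {G : SimpleGraph V} {u v : V} {m : ℕ}
    (hr : G.Reachable u v) (h : G.dist u v = m + 1) : ∃ w, G.Adj v w ∧ G.dist u w = m := by
  obtain ⟨p, hp⟩ := hr.symm.exists_walk_length_eq_dist
  rw [SimpleGraph.dist_comm, h] at hp
  cases p with
  | nil => simp at hp
  | @cons _ w _ hadj q =>
    refine ⟨w, hadj, le_antisymm ?_ ?_⟩
    · rw [SimpleGraph.Walk.length_cons] at hp
      rw [SimpleGraph.dist_comm]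
      exact (SimpleGraph.dist_le q).trans (by omega)
    · have := SimpleGraph.dist_le_dist_add_one_of_adj (u := u) hadj.symm
      omega

end

theorem stmt15_general {V : Type*} (v₀ : V) (nEdge : V → V → ℕ)
    (hsymm : ∀ v w, nEdge v w = nEdge w v)
    (G : SimpleGraph V)
    (hG : ∀ v w, G.Adj v w ↔ 1 ≤ nEdge v w)
    (hconn : ∀ v, G.Reachable v₀ v)
    (hlocfin : ∀ v, {w | 1 ≤ nEdge v w}.Finite)
    (hball : ∀ j : ℕ, {v | G.dist v₀ v ≤ j}.Finite)
    (δ : ℝ) (hδ : 1 < δ)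
    (γ : V → ℝ) (hγ : ∀ v, 1 ≤ γ v)
    (hPF : ∀ v, δ * γ v = ∑ᶠ w, (nEdge v w : ℝ) * γ w)
    (k : ℕ) (hk : 2 ≤ k) :
    (∑ᶠ u ∈ {v | G.dist v₀ v ≤ k}, ∑ᶠ w ∈ {v | G.dist v₀ v ≤ k},
        (nEdge u w : ℝ) * γ u * γ w)
      - (∑ᶠ u ∈ {v | G.dist v₀ v ≤ k}, γ u ^ 2)
      + (∑ᶠ v ∈ {v | G.dist v₀ v ≤ k ∧
            (∑ᶠ w ∈ {u | G.dist v₀ u ≤ k}, (nEdge v w : ℝ) * γ w) < γ v},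
          (γ v - ∑ᶠ w ∈ {u | G.dist v₀ u ≤ k}, (nEdge v w : ℝ) * γ w) ^ 2)
      ≥ (δ - 1) * ∑ᶠ v ∈ {v | G.dist v₀ v ≤ k - 2}, γ v ^ 2 := by
  refine sub_one_mul_finsum_sq_le_of_levels (fun u w h => ?_) (fun u m h => ?_) hsymm hlocfin
    hball hδ.le (fun v => zero_le_one.trans (hγ v)) hPF hk
  · exact SimpleGraph.dist_le_dist_add_one_of_adj ((hG u w).2 (Nat.one_le_iff_ne_zero.2 h))
  · obtain ⟨v, hadj, hv⟩ := (hconn u).exists_adj_dist_eq h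
    exact ⟨v, Nat.one_le_iff_ne_zero.1 ((hG u v).1 hadj), hv⟩

/-- Let `(V, nEdge)` be a connected, locally finite, loopless multigraph with base
vertex `v₀`, `G` the underlying simple graph, and balls `Γ_j = {v | dist(v₀,v) ≤ j}`
finite.  Let `δ > 1` and let `γ : V → ℝ` be a weighting with `γ_v ≥ 1` satisfying the
Perron–Frobenius condition `δ γ_v = Σ_w n(v,w) γ_w`.  With
`α_v^{(k)} = Σ_{w ∈ Γ_k} n(v,w) γ_w` and `B_k = {v ∈ Γ_k | γ_v > α_v^{(k)}}`,
for every `k ≥ 2` one has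
`Σ_{u,w ∈ Γ_k} n(u,w) γ_u γ_w − Σ_{u ∈ Γ_k} γ_u² + Σ_{v ∈ B_k} (γ_v − α_v^{(k)})²
  ≥ (δ − 1) Σ_{v ∈ Γ_{k−2}} γ_v²`. -/
theorem stmt15 {V : Type*} (v₀ : V) (nEdge : V → V → ℕ)
    (hsymm : ∀ v w, nEdge v w = nEdge w v)
    (hloop : ∀ v, nEdge v v = 0)
    (G : SimpleGraph V)
    (hG : ∀ v w, G.Adj v w ↔ 1 ≤ nEdge v w)
    (hconn : ∀ v, G.Reachable v₀ v)
    (hlocfin : ∀ v, {w | 1 ≤ nEdge v w}.Finite)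
    (hball : ∀ j : ℕ, {v | G.dist v₀ v ≤ j}.Finite)
    (δ : ℝ) (hδ : 1 < δ)
    (γ : V → ℝ) (hγ : ∀ v, 1 ≤ γ v)
    (hPF : ∀ v, δ * γ v = ∑ᶠ w, (nEdge v w : ℝ) * γ w)
    (k : ℕ) (hk : 2 ≤ k) :
    (∑ᶠ u ∈ {v | G.dist v₀ v ≤ k}, ∑ᶠ w ∈ {v | G.dist v₀ v ≤ k},
        (nEdge u w : ℝ) * γ u * γ w)
      - (∑ᶠ u ∈ {v | G.dist v₀ v ≤ k}, γ u ^ 2)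
      + (∑ᶠ v ∈ {v | G.dist v₀ v ≤ k ∧
            (∑ᶠ w ∈ {u | G.dist v₀ u ≤ k}, (nEdge v w : ℝ) * γ w) < γ v},
          (γ v - ∑ᶠ w ∈ {u | G.dist v₀ u ≤ k}, (nEdge v w : ℝ) * γ w) ^ 2)
      ≥ (δ - 1) * ∑ᶠ v ∈ {v | G.dist v₀ v ≤ k - 2}, γ v ^ 2 :=
  stmt15_general v₀ nEdge hsymm G hG hconn hlocfin hball δ hδ γ hγ hPF k hk
end

section
/- If moreover V is infinite, then the quantity Q_k = Σ_{u∈Γ_k} Σ_{w∈Γ_k} n(u,w)·γ_u·γ_w − Σ_{u∈Γ_k} γ_u² + Σ_{v∈B_k} (γ_v − α_v^{(k)})² tends to infinity as k → ∞. -/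
/-!
On `Γ_k` replace `γ` by its truncation `y = min(γ, α^{(k)})`. No two vertices of `B_k` are
adjacent (for adjacent `u, w` one has `α_u ≥ γ_w`, so `γ_u > α_u ≥ γ_w > α_w ≥ γ_u`), so
expanding the quadratic form at `γ = y + (γ - y)` leaves no second-order term and gives
`Q_k = ∑_u y_u ((N y)_u - y_u)`, with `N` the adjacency matrix restricted to `Γ_k`.
Every term is nonnegative: a vertex next to a truncated vertex `w` already receives at least
`α_w ≥ γ_u` from it. On `Γ_{k-2}` nothing nearby is truncated and `Γ_k` contains the whole
neighbourhood, so the Perron–Frobenius condition makes the term `(δ - 1) γ_u² ≥ δ - 1`.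
Hence `Q_k ≥ (δ - 1) |Γ_{k-2}|`, which is unbounded since `V` is infinite and balls are finite.
-/

open Finset Filter

section Truncation

variable {V : Type*} (n : V → V → ℕ) (γ : V → ℝ) (s : Finset V)

-- For `s = Γ_k`, `nbrWeight` is `α^{(k)}` and `freeDimNumerator` is `Q_k`.
def nbrWeight (v : V) : ℝ := ∑ w ∈ s, (n v w : ℝ) * γ w

def truncWeight (v : V) : ℝ := min (γ v) (nbrWeight n γ s v)

noncomputable def freeDimNumerator : ℝ :=
  (∑ u ∈ s, ∑ w ∈ s, (n u w : ℝ) * γ u * γ w) - ∑ u ∈ s, γ u ^ 2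
    + ∑ v ∈ s with nbrWeight n γ s v < γ v, (γ v - nbrWeight n γ s v) ^ 2

variable {n γ s}

lemma le_nbrWeight (hγ : ∀ v, 0 ≤ γ v) {v u : V} (hu : u ∈ s) (hvu : 1 ≤ n v u) :
    γ u ≤ nbrWeight n γ s v :=
  calc γ u ≤ (n v u : ℝ) * γ u := le_mul_of_one_le_left (hγ u) (by exact_mod_cast hvu)
    _ ≤ nbrWeight n γ s v :=
      single_le_sum (f := fun w => (n v w : ℝ) * γ w)
        (fun w _ => mul_nonneg (Nat.cast_nonneg _) (hγ w)) hu

lemma truncWeight_nonneg (hγ : ∀ v, 0 ≤ γ v) (v : V) : 0 ≤ truncWeight n γ s v :=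
  le_min (hγ v) (sum_nonneg fun w _ => mul_nonneg (Nat.cast_nonneg _) (hγ w))

lemma truncWeight_eq_of_le {v : V} (h : γ v ≤ nbrWeight n γ s v) : truncWeight n γ s v = γ v :=
  min_eq_left h

lemma truncWeight_eq_nbrWeight_of_lt {v : V} (h : nbrWeight n γ s v < γ v) :
    truncWeight n γ s v = nbrWeight n γ s v :=
  min_eq_right h.le

lemma eq_zero_of_nbrWeight_lt (hsymm : ∀ v w, n v w = n w v) (hγ : ∀ v, 0 ≤ γ v) {u v : V}
    (hu : u ∈ s) (hv : v ∈ s) (hu' : nbrWeight n γ s u < γ u)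
    (hv' : nbrWeight n γ s v < γ v) : n u v = 0 := by
  by_contra h
  have h₁ := le_nbrWeight hγ hv (Nat.one_le_iff_ne_zero.2 h)
  have h₂ := le_nbrWeight hγ hu (Nat.one_le_iff_ne_zero.2 (hsymm u v ▸ h))
  linarith

lemma truncWeight_le_sum (hsymm : ∀ v w, n v w = n w v) (hγ : ∀ v, 0 ≤ γ v) {u : V}
    (hu : u ∈ s) : truncWeight n γ s u ≤ ∑ w ∈ s, (n u w : ℝ) * truncWeight n γ s w := by
  by_cases h : ∃ w ∈ s, 1 ≤ n u w ∧ nbrWeight n γ s w < γ w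
  · obtain ⟨w, hw, huw, hlt⟩ := h
    calc truncWeight n γ s u ≤ γ u := min_le_left _ _
      _ ≤ nbrWeight n γ s w := le_nbrWeight hγ hu (hsymm u w ▸ huw)
      _ = truncWeight n γ s w := (truncWeight_eq_nbrWeight_of_lt hlt).symm
      _ ≤ (n u w : ℝ) * truncWeight n γ s w :=
        le_mul_of_one_le_left (truncWeight_nonneg hγ w) (by exact_mod_cast huw)
      _ ≤ _ := single_le_sum (f := fun w => (n u w : ℝ) * truncWeight n γ s w)
        (fun w _ => mul_nonneg (Nat.cast_nonneg _) (truncWeight_nonneg hγ w)) hw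
  · push Not at h
    calc truncWeight n γ s u ≤ nbrWeight n γ s u := min_le_right _ _
      _ = _ := sum_congr rfl fun w hw => by
        rcases Nat.eq_zero_or_pos (n u w) with h0 | hpos
        · simp [h0]
        · rw [truncWeight_eq_of_le (h w hw hpos)]

theorem freeDimNumerator_eq_sum_truncWeight (hsymm : ∀ v w, n v w = n w v)
    (hγ : ∀ v, 0 ≤ γ v) :
    freeDimNumerator n γ s = ∑ u ∈ s, truncWeight n γ s u *
      (∑ w ∈ s, (n u w : ℝ) * truncWeight n γ s w - truncWeight n γ s u) := by
  rw [freeDimNumerator, sum_filter]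
  set a := nbrWeight n γ s
  set y := truncWeight n γ s
  -- the defect `γ - y` lives on `s.filter (a < γ)`, which carries no edges
  have hcross : ∀ u ∈ s, ∀ w ∈ s, (n u w : ℝ) * (γ u - y u) * (γ w - y w) = 0 := by
    intro u hu w hw
    by_cases hau : a u < γ u
    · by_cases haw : a w < γ w
      · simp [eq_zero_of_nbrWeight_lt hsymm hγ hu hw hau haw]
      · simp [y, truncWeight_eq_of_le (not_lt.1 haw)]
    · simp [y, truncWeight_eq_of_le (not_lt.1 hau)]
  have hlin : ∑ u ∈ s, ∑ w ∈ s, (n u w : ℝ) * (γ u - y u) * γ w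
      = ∑ u ∈ s, (γ u - y u) * a u := by
    refine sum_congr rfl fun u _ => ?_
    simp only [a, nbrWeight, mul_sum]
    exact sum_congr rfl fun w _ => by ring
  have hswap : ∑ u ∈ s, ∑ w ∈ s, (n u w : ℝ) * γ u * (γ w - y w)
      = ∑ u ∈ s, ∑ w ∈ s, (n u w : ℝ) * (γ u - y u) * γ w := by
    rw [sum_comm]
    exact sum_congr rfl fun u _ => sum_congr rfl fun w _ => by rw [hsymm]; ring
  have hquad : ∑ u ∈ s, y u * ∑ w ∈ s, (n u w : ℝ) * y w
      = ∑ u ∈ s, ∑ w ∈ s, (n u w : ℝ) * γ u * γ w - 2 * ∑ u ∈ s, (γ u - y u) * a u :=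
    calc ∑ u ∈ s, y u * ∑ w ∈ s, (n u w : ℝ) * y w
        = ∑ u ∈ s, ∑ w ∈ s, ((n u w : ℝ) * γ u * γ w - (n u w : ℝ) * (γ u - y u) * γ w
            - (n u w : ℝ) * γ u * (γ w - y w)) := by
          simp only [mul_sum]
          exact sum_congr rfl fun u hu => sum_congr rfl fun w hw => by
            linear_combination hcross u hu w hw
      _ = _ := by simp only [sum_sub_distrib, hswap, hlin]; ring
  have hdiag : ∀ u, (if a u < γ u then (γ u - a u) ^ 2 else 0)
      = γ u ^ 2 - y u * y u - 2 * ((γ u - y u) * a u) := by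
    intro u
    by_cases h : a u < γ u
    · rw [if_pos h, show y u = a u from truncWeight_eq_nbrWeight_of_lt h]; ring
    · rw [if_neg h, show y u = γ u from truncWeight_eq_of_le (not_lt.1 h)]; ring
  simp only [hdiag, mul_sub, sum_sub_distrib, ← mul_sum, hquad]
  ring

lemma nbrWeight_eq_of_forall_mem {δ : ℝ} {u : V} (hPF : δ * γ u = ∑ᶠ w, (n u w : ℝ) * γ w)
    (hu : ∀ w, 1 ≤ n u w → w ∈ s) : nbrWeight n γ s u = δ * γ u := by
  have hsupp : Function.support (fun w => (n u w : ℝ) * γ w) ⊆ s := fun w hw =>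
    hu w (Nat.one_le_iff_ne_zero.2 fun h => hw (by simp [h]))
  rw [hPF, finsum_eq_sum_of_support_subset _ hsupp]
  rfl

theorem card_mul_le_freeDimNumerator (hsymm : ∀ v w, n v w = n w v) (hγ : ∀ v, 1 ≤ γ v)
    {δ : ℝ} (hδ : 1 ≤ δ) (hPF : ∀ v, δ * γ v = ∑ᶠ w, (n v w : ℝ) * γ w) {t : Finset V}
    (hts : t ⊆ s) (ht : ∀ u ∈ t, ∀ w, 1 ≤ n u w → w ∈ s ∧ ∀ x, 1 ≤ n w x → x ∈ s) :
    (δ - 1) * #t ≤ freeDimNumerator n γ s := by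
  have hγ0 : ∀ v, 0 ≤ γ v := fun v => zero_le_one.trans (hγ v)
  set y := truncWeight n γ s
  have hy : ∀ v, (∀ x, 1 ≤ n v x → x ∈ s) → y v = γ v := fun v hv =>
    truncWeight_eq_of_le (by rw [nbrWeight_eq_of_forall_mem (hPF v) hv]; nlinarith [hγ v])
  have hterm : ∀ u ∈ s, 0 ≤ y u * (∑ w ∈ s, (n u w : ℝ) * y w - y u) := fun u hu =>
    mul_nonneg (truncWeight_nonneg hγ0 u) (sub_nonneg.2 (truncWeight_le_sum hsymm hγ0 hu))
  have hinner : ∀ u ∈ t, δ - 1 ≤ y u * (∑ w ∈ s, (n u w : ℝ) * y w - y u) := by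
    intro u hu
    have hNy : ∑ w ∈ s, (n u w : ℝ) * y w = δ * γ u := by
      rw [← nbrWeight_eq_of_forall_mem (hPF u) fun w hw => (ht u hu w hw).1]
      refine sum_congr rfl fun w _ => ?_
      rcases Nat.eq_zero_or_pos (n u w) with h0 | hpos
      · simp [h0]
      · rw [hy w (ht u hu w hpos).2]
    rw [hNy, hy u fun w hw => (ht u hu w hw).1]
    have hγsq : 1 ≤ γ u * γ u := one_le_mul_of_one_le_of_one_le (hγ u) (hγ u)
    nlinarith [mul_le_mul_of_nonneg_left hγsq (sub_nonneg.2 hδ)]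
  rw [freeDimNumerator_eq_sum_truncWeight hsymm hγ0]
  calc (δ - 1) * #t = ∑ u ∈ t, (δ - 1) := by rw [sum_const, nsmul_eq_mul, mul_comm]
    _ ≤ ∑ u ∈ t, y u * (∑ w ∈ s, (n u w : ℝ) * y w - y u) := sum_le_sum hinner
    _ ≤ ∑ u ∈ s, y u * (∑ w ∈ s, (n u w : ℝ) * y w - y u) :=
      sum_le_sum_of_subset_of_nonneg hts fun u hu _ => hterm u hu

theorem finsum_eq_freeDimNumerator {S : Set V} (hS : S.Finite) :
    (∑ᶠ u ∈ S, ∑ᶠ w ∈ S, (n u w : ℝ) * γ u * γ w) - ∑ᶠ u ∈ S, γ u ^ 2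
      + ∑ᶠ v ∈ {v | v ∈ S ∧ (∑ᶠ w ∈ S, (n v w : ℝ) * γ w) < γ v},
          (γ v - ∑ᶠ w ∈ S, (n v w : ℝ) * γ w) ^ 2
      = freeDimNumerator n γ hS.toFinset := by
  have hB : {v | v ∈ S ∧ (∑ᶠ w ∈ S, (n v w : ℝ) * γ w) < γ v}
      = (({v ∈ hS.toFinset | nbrWeight n γ hS.toFinset v < γ v} : Finset V) : Set V) := by
    ext v
    rw [Finset.mem_coe, Finset.mem_filter, Set.Finite.mem_toFinset]
    simp [nbrWeight, finsum_mem_eq_finite_toFinset_sum _ hS]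
  rw [hB, finsum_mem_coe_finset]
  simp only [finsum_mem_eq_finite_toFinset_sum _ hS]
  rfl

end Truncation

theorem tendsto_ncard_setOf_le_atTop {V : Type*} [Infinite V] (f : V → ℕ)
    (hf : ∀ j, {v | f v ≤ j}.Finite) : Tendsto (fun j => {v | f v ≤ j}.ncard) atTop atTop := by
  refine tendsto_atTop_atTop.2 fun N => ?_
  obtain ⟨t, rfl⟩ := Infinite.exists_subset_card_eq V N
  refine ⟨t.sup f, fun j hj => ?_⟩
  rw [← Set.ncard_coe_finset]
  exact Set.ncard_le_ncard (fun v hv => (le_sup hv).trans hj) (hf j)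

theorem stmt16_general {V : Type*} (hV : Infinite V) (v₀ : V) (nEdge : V → V → ℕ)
    (hsymm : ∀ v w, nEdge v w = nEdge w v)
    (G : SimpleGraph V)
    (hG : ∀ v w, G.Adj v w ↔ 1 ≤ nEdge v w)
    (hball : ∀ j : ℕ, {v | G.dist v₀ v ≤ j}.Finite)
    (δ : ℝ) (hδ : 1 < δ)
    (γ : V → ℝ) (hγ : ∀ v, 1 ≤ γ v)
    (hPF : ∀ v, δ * γ v = ∑ᶠ w, (nEdge v w : ℝ) * γ w) :
    Filter.Tendsto (fun k : ℕ =>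
      (∑ᶠ u ∈ {v | G.dist v₀ v ≤ k}, ∑ᶠ w ∈ {v | G.dist v₀ v ≤ k},
          (nEdge u w : ℝ) * γ u * γ w)
        - (∑ᶠ u ∈ {v | G.dist v₀ v ≤ k}, γ u ^ 2)
        + (∑ᶠ v ∈ {v | G.dist v₀ v ≤ k ∧
              (∑ᶠ w ∈ {u | G.dist v₀ u ≤ k}, (nEdge v w : ℝ) * γ w) < γ v},
            (γ v - ∑ᶠ w ∈ {u | G.dist v₀ u ≤ k}, (nEdge v w : ℝ) * γ w) ^ 2))
      Filter.atTop Filter.atTop := by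
  have hstep : ∀ v w, 1 ≤ nEdge v w → G.dist v₀ w ≤ G.dist v₀ v + 1 := fun v w h => by
    rcases ((hG v w).2 h).diff_dist_adj (u := v₀) with h | h | h <;> omega
  have hbound : ∀ k, (δ - 1) * {v | G.dist v₀ v ≤ k}.ncard
      ≤ freeDimNumerator nEdge γ (hball (k + 2)).toFinset := fun k => by
    rw [Set.ncard_eq_toFinset_card _ (hball k)]
    refine card_mul_le_freeDimNumerator hsymm hγ hδ.le hPF (fun v hv => ?_)
      fun u hu w huw => ⟨?_, fun x hwx => ?_⟩
    all_goals simp only [Set.Finite.mem_toFinset, Set.mem_ofPred_eq] at *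
    · omega
    · have := hstep u w huw; omega
    · have := hstep u w huw; have := hstep w x hwx; omega
  have hlow : Tendsto (fun k : ℕ => (δ - 1) * {v | G.dist v₀ v ≤ k}.ncard) atTop atTop :=
    (tendsto_natCast_atTop_atTop.comp (tendsto_ncard_setOf_le_atTop _ hball)).const_mul_atTop
      (by linarith)
  rw [← tendsto_add_atTop_iff_nat 2]
  exact (tendsto_atTop_mono hbound hlow).congr fun k => (finsum_eq_freeDimNumerator _).symm

/-- Let `(V, nEdge)` be a connected, locally finite, loopless multigraph with base
vertex `v₀`, `G` the underlying simple graph, and balls `Γ_j = {v | dist(v₀,v) ≤ j}`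
finite.  Let `δ > 1` and let `γ : V → ℝ` be a weighting with `γ_v ≥ 1` satisfying the
Perron–Frobenius condition `δ γ_v = Σ_w n(v,w) γ_w`.  If moreover `V` is infinite,
then, with `α_v^{(k)} = Σ_{w ∈ Γ_k} n(v,w) γ_w` and `B_k = {v ∈ Γ_k | γ_v > α_v^{(k)}}`,
the quantity
`Q_k = Σ_{u,w ∈ Γ_k} n(u,w) γ_u γ_w − Σ_{u ∈ Γ_k} γ_u² + Σ_{v ∈ B_k} (γ_v − α_v^{(k)})²`
tends to infinity as `k → ∞`. -/
theorem stmt16 {V : Type*} (hV : Infinite V) (v₀ : V) (nEdge : V → V → ℕ)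
    (hsymm : ∀ v w, nEdge v w = nEdge w v)
    (hloop : ∀ v, nEdge v v = 0)
    (G : SimpleGraph V)
    (hG : ∀ v w, G.Adj v w ↔ 1 ≤ nEdge v w)
    (hconn : ∀ v, G.Reachable v₀ v)
    (hlocfin : ∀ v, {w | 1 ≤ nEdge v w}.Finite)
    (hball : ∀ j : ℕ, {v | G.dist v₀ v ≤ j}.Finite)
    (δ : ℝ) (hδ : 1 < δ)
    (γ : V → ℝ) (hγ : ∀ v, 1 ≤ γ v)
    (hPF : ∀ v, δ * γ v = ∑ᶠ w, (nEdge v w : ℝ) * γ w) :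
    Filter.Tendsto (fun k : ℕ =>
      (∑ᶠ u ∈ {v | G.dist v₀ v ≤ k}, ∑ᶠ w ∈ {v | G.dist v₀ v ≤ k},
          (nEdge u w : ℝ) * γ u * γ w)
        - (∑ᶠ u ∈ {v | G.dist v₀ v ≤ k}, γ u ^ 2)
        + (∑ᶠ v ∈ {v | G.dist v₀ v ≤ k ∧
              (∑ᶠ w ∈ {u | G.dist v₀ u ≤ k}, (nEdge v w : ℝ) * γ w) < γ v},
            (γ v - ∑ᶠ w ∈ {u | G.dist v₀ u ≤ k}, (nEdge v w : ℝ) * γ w) ^ 2))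
      Filter.atTop Filter.atTop :=
  stmt16_general hV v₀ nEdge hsymm G hG hball δ hδ γ hγ hPF
end
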